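/- arXiv:0812.4663 — 3 statements merged into one kernel-verified Lean document; each statement's English description precedes it below -/
import Mathlib

section
/- For every continuously differentiable function f with compact support on [0,∞) and every R > 0, the inequality ∫_R^∞ |f'(t)|² dt ≥ ∫_R^∞ f(t)²/(4t²) dt − f(R)²/(2R) holds. -/
open MeasureTheory Set Filter Topology

/-! Completing the square: for `t ≠ 0`,
`f'² = (f' - f / (2t))² + (f² / (2t))' + f² / (4t²)`.
Integrate over `(R, ∞)`: the square is nonnegative, and since `f` vanishes near infinity the
exact derivative integrates to `-f(R)² / (2R)`. -/

theorem ContinuousOn.integrableOn_of_isClosed_of_eqOn_compl {X E : Type*} [TopologicalSpace X]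
    [T2Space X] [MeasurableSpace X] [OpensMeasurableSpace X] {μ : Measure X}
    [IsFiniteMeasureOnCompacts μ] [NormedAddCommGroup E] {g : X → E} {s K : Set X}
    (hg : ContinuousOn g s) (hs : IsClosed s) (hK : IsCompact K) (hgK : EqOn g 0 Kᶜ) :
    IntegrableOn g s μ :=
  ((hg.mono inter_subset_left).integrableOn_compact (hK.inter_left hs)).of_forall_sdiff_eq_zero
    hs.measurableSet fun _ hx => hgK fun hxK => hx.2 ⟨hx.1, hxK⟩

theorem HasCompactSupport.integrableOn_Ioi_of_eq_zero {f g : ℝ → ℝ} (hf : HasCompactSupport f)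
    {R : ℝ} (hg : ContinuousOn g (Ici R)) (hg0 : ∀ t, f t = 0 → deriv f t = 0 → g t = 0) :
    IntegrableOn g (Ioi R) :=
  (hg.integrableOn_of_isClosed_of_eqOn_compl isClosed_Ici
    (hf.isCompact.union hf.deriv.isCompact) fun t ht =>
      hg0 t (image_eq_zero_of_notMem_tsupport fun h => ht (.inl h))
        (image_eq_zero_of_notMem_tsupport fun h => ht (.inr h))).mono_set Ioi_subset_Ici_self

theorem HasDerivAt.sq_div_two_mul {f : ℝ → ℝ} {f' t : ℝ} (hf : HasDerivAt f f' t)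
    (ht : t ≠ 0) :
    HasDerivAt (fun s => f s ^ 2 / (2 * s)) (f t * f' / t - f t ^ 2 / (2 * t ^ 2)) t :=
  ((hf.fun_pow 2).fun_div ((hasDerivAt_id' t).const_mul 2) (by simpa using ht)).congr_deriv
    (by field_simp; ring)

theorem integral_Ioi_deriv_sq_div_two_mul {f f' : ℝ → ℝ} {R : ℝ} (hR : 0 < R)
    (hf : ∀ t ∈ Ici R, HasDerivAt f (f' t) t)
    (hint : IntegrableOn (fun t => f t * f' t / t - f t ^ 2 / (2 * t ^ 2)) (Ioi R))
    (hlim : Tendsto f atTop (𝓝 0)) :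
    ∫ t in Ioi R, (f t * f' t / t - f t ^ 2 / (2 * t ^ 2)) = -(f R ^ 2 / (2 * R)) := by
  have hlim' : Tendsto (fun t => f t ^ 2 / (2 * t)) atTop (𝓝 0) := by
    simpa using (hlim.pow 2).div_atTop (tendsto_id.const_mul_atTop two_pos)
  rw [integral_Ioi_of_hasDerivAt_of_tendsto'
    (fun t ht => (hf t ht).sq_div_two_mul (hR.trans_le ht).ne') hint hlim', zero_sub]

/-- Hardy's inequality with boundary term on the half-line:
for `f ∈ C_c^1([0,∞))` and `R > 0`,
`∫_R^∞ |f'|² dt ≥ ∫_R^∞ f²/(4t²) dt − f(R)²/(2R)`. -/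
theorem hardy_inequality_boundary (f : ℝ → ℝ) (hf : ContDiff ℝ 1 f)
    (hsupp : HasCompactSupport f) (R : ℝ) (hR : 0 < R) :
    (∫ t in Ioi R, (deriv f t) ^ 2) ≥
      (∫ t in Ioi R, (f t) ^ 2 / (4 * t ^ 2)) - (f R) ^ 2 / (2 * R) := by
  have hc : Continuous f := hf.continuous
  have hc' : Continuous (deriv f) := hf.continuous_deriv le_rfl
  have hne : ∀ t ∈ Ici R, t ≠ 0 := fun t ht => (hR.trans_le ht).ne'
  have hsq : IntegrableOn (fun t => (deriv f t - f t / (2 * t)) ^ 2) (Ioi R) :=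
    hsupp.integrableOn_Ioi_of_eq_zero (by fun_prop (disch := intro t ht; simp [hne t ht]))
      fun t h h' => by simp [h, h']
  have hbd : IntegrableOn (fun t => f t * deriv f t / t - f t ^ 2 / (2 * t ^ 2)) (Ioi R) :=
    hsupp.integrableOn_Ioi_of_eq_zero (by fun_prop (disch := intro t ht; simp [hne t ht]))
      fun t h h' => by simp [h, h']
  have hhardy : IntegrableOn (fun t => f t ^ 2 / (4 * t ^ 2)) (Ioi R) :=
    hsupp.integrableOn_Ioi_of_eq_zero (by fun_prop (disch := intro t ht; simp [hne t ht]))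
      fun t h _ => by simp [h]
  calc ∫ t in Ioi R, deriv f t ^ 2
      = (∫ t in Ioi R, (deriv f t - f t / (2 * t)) ^ 2)
        + (∫ t in Ioi R, (f t * deriv f t / t - f t ^ 2 / (2 * t ^ 2)))
        + ∫ t in Ioi R, f t ^ 2 / (4 * t ^ 2) := by
        rw [← integral_add hsq hbd, ← integral_add (hsq.fun_add hbd) hhardy]
        refine setIntegral_congr_fun measurableSet_Ioi fun t ht => ?_
        have := hne t (mem_Ici_of_Ioi ht)
        field_simp
        ring
    _ = (∫ t in Ioi R, (deriv f t - f t / (2 * t)) ^ 2)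
        - f R ^ 2 / (2 * R) + ∫ t in Ioi R, f t ^ 2 / (4 * t ^ 2) := by
        rw [integral_Ioi_deriv_sq_div_two_mul hR
          (fun t _ => (hf.differentiable one_ne_zero t).hasDerivAt) hbd
          (hsupp.is_zero_at_infty.mono_left atTop_le_cocompact)]
        ring
    _ ≥ (∫ t in Ioi R, f t ^ 2 / (4 * t ^ 2)) - f R ^ 2 / (2 * R) := by
        have : 0 ≤ ∫ t in Ioi R, (deriv f t - f t / (2 * t)) ^ 2 :=
          setIntegral_nonneg measurableSet_Ioi fun t _ => sq_nonneg _
        linarith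
end

section
/- With χ and φ as above (φ(t) = χ(t)t^{1/2}), and V continuous on (0,∞) satisfying V(t) ≤ −(1+δ)/(4t²) for t ≥ R̃ with δ > 0, and R ≥ R̃: ∫_0^∞ (|φ'|² + Vφ²) dt ≤ 3 − (δ/4)·log(k/2). In particular, if k > 2·exp(12/δ) then ∫_0^∞ (|φ'|² + Vφ²) dt < 0. -/
/-! Where `χ` is affine, `χ t = α t + β`, the test function is `(α t + β) √t` and
`φ'² = 2α²t + αβ + (αt + β)²/(4t)`. The last term is exactly cancelled by the Hardy part
`-1/(4t²)` of the bound on `V`, which leaves `-δ (αt + β)²/(4t)`. Dropping this on the two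
ramps and keeping it on the plateau `χ = 1` bounds the energy by `2 + 1` on the ramps and by
`-(δ/4) log (k/2)` on the plateau; outside `[R, 2kR]` the test function vanishes. -/

open MeasureTheory Set

/-- The piecewise linear cutoff `χ`: `0` on `[0,R]`, `(t−R)/R` on `[R,2R]`,
`1` on `[2R,kR]`, `−(t−2kR)/(kR)` on `[kR,2kR]`, and `0` beyond. -/
noncomputable def cutoff (R k t : ℝ) : ℝ :=
  if t ≤ R then 0
  else if t ≤ 2 * R then (t - R) / R
  else if t ≤ k * R then 1
  else if t ≤ 2 * k * R then -(t - 2 * k * R) / (k * R)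
  else 0

/-- The test function `φ(t) = χ(t)·t^{1/2}`. -/
noncomputable def testFn (R k t : ℝ) : ℝ := cutoff R k t * Real.sqrt t

open Filter Topology

noncomputable def energyDensity (V f : ℝ → ℝ) (t : ℝ) : ℝ := deriv f t ^ 2 + V t * f t ^ 2

noncomputable def affineMulSqrt (α β t : ℝ) : ℝ := (α * t + β) * Real.sqrt t

noncomputable def energyBound (α β ε t : ℝ) : ℝ :=
  2 * α ^ 2 * t + α * β - ε * (α * t + β) ^ 2 / (4 * t)

section EnergyDensity

variable {V f g : ℝ → ℝ} {α β ε t : ℝ}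

lemma energyDensity_congr (h : f =ᶠ[𝓝 t] g) : energyDensity V f t = energyDensity V g t := by
  rw [energyDensity, energyDensity, h.deriv_eq, h.eq_of_nhds]

lemma energyDensity_eq_zero (h : f =ᶠ[𝓝 t] 0) : energyDensity V f t = 0 := by
  rw [energyDensity_congr h]
  simp [energyDensity]

lemma hasDerivAt_affineMulSqrt (ht : 0 < t) :
    HasDerivAt (affineMulSqrt α β) (α * Real.sqrt t + (α * t + β) / (2 * Real.sqrt t)) t := by
  refine ((((hasDerivAt_id t).const_mul α).add_const β).mul
    (Real.hasDerivAt_sqrt ht.ne')).congr_deriv ?_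
  simp only [id, mul_one]
  ring

lemma energyDensity_affineMulSqrt (ht : 0 < t) :
    energyDensity V (affineMulSqrt α β) t =
      2 * α ^ 2 * t + α * β + (1 + 4 * t ^ 2 * V t) * (α * t + β) ^ 2 / (4 * t) := by
  rw [energyDensity, (hasDerivAt_affineMulSqrt ht).deriv, affineMulSqrt]
  obtain ⟨u, hu, rfl⟩ : ∃ u > 0, u ^ 2 = t := ⟨√t, Real.sqrt_pos.2 ht, Real.sq_sqrt ht.le⟩
  rw [Real.sqrt_sq hu.le]
  field_simp
  ring

lemma energyDensity_affineMulSqrt_le (ht : 0 < t) (hV : V t ≤ -(1 + ε) / (4 * t ^ 2)) :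
    energyDensity V (affineMulSqrt α β) t ≤ energyBound α β ε t := by
  have h4V : 4 * t ^ 2 * V t ≤ -(1 + ε) := by
    rwa [le_div_iff₀' (by positivity)] at hV
  rw [energyDensity_affineMulSqrt ht, energyBound, sub_eq_add_neg, ← neg_div,
    neg_mul_eq_neg_mul]
  gcongr
  linarith

lemma continuousOn_energyDensity_affineMulSqrt {s : Set ℝ} (hs : s ⊆ Ioi 0)
    (hV : ContinuousOn V s) : ContinuousOn (energyDensity V (affineMulSqrt α β)) s := by
  refine ContinuousOn.congr ?_ fun t ht => energyDensity_affineMulSqrt (hs ht)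
  have : ∀ t ∈ s, 4 * t ≠ 0 := fun t ht => by have : 0 < t := hs ht; positivity
  fun_prop (disch := assumption)

lemma continuousOn_energyBound {s : Set ℝ} (hs : s ⊆ Ioi 0) :
    ContinuousOn (energyBound α β ε) s := by
  have : ∀ t ∈ s, 4 * t ≠ 0 := fun t ht => by have : 0 < t := hs ht; positivity
  unfold energyBound
  fun_prop (disch := assumption)

end EnergyDensity

section AffinePiece

variable {V f : ℝ → ℝ} {α β ε a b : ℝ}

lemma energyDensity_eqOn_Ioo (hf : EqOn f (affineMulSqrt α β) (Ioo a b)) :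
    EqOn (energyDensity V f) (energyDensity V (affineMulSqrt α β)) (Ioo a b) := fun _ ht =>
  energyDensity_congr (eventuallyEq_of_mem (Ioo_mem_nhds ht.1 ht.2) hf)

lemma intervalIntegrable_energyDensity (ha : 0 < a) (hab : a ≤ b)
    (hf : EqOn f (affineMulSqrt α β) (Ioo a b)) (hV : ContinuousOn V (Icc a b)) :
    IntervalIntegrable (energyDensity V f) volume a b := by
  refine ((continuousOn_energyDensity_affineMulSqrt (α := α) (β := β)
    (fun t ht => ha.trans_le ht.1) hV).intervalIntegrable_of_Icc hab).congr_uIoo ?_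
  rw [uIoo_of_le hab]
  exact (energyDensity_eqOn_Ioo hf).symm

lemma integral_energyDensity_le (ha : 0 < a) (hab : a ≤ b)
    (hf : EqOn f (affineMulSqrt α β) (Ioo a b)) (hV : ContinuousOn V (Icc a b))
    (hVle : ∀ t ∈ Icc a b, V t ≤ -(1 + ε) / (4 * t ^ 2)) :
    ∫ t in a..b, energyDensity V f t ≤ ∫ t in a..b, energyBound α β ε t := by
  have hpos : Icc a b ⊆ Ioi 0 := fun t ht => ha.trans_le ht.1
  rw [intervalIntegral.integral_congr_Ioo_of_le hab (energyDensity_eqOn_Ioo hf)]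
  exact intervalIntegral.integral_mono_on hab
    ((continuousOn_energyDensity_affineMulSqrt hpos hV).intervalIntegrable_of_Icc hab)
    ((continuousOn_energyBound hpos).intervalIntegrable_of_Icc hab)
    fun t ht => energyDensity_affineMulSqrt_le (hpos ht) (hVle t ht)

lemma integral_energyBound_zero (α β a b : ℝ) :
    ∫ t in a..b, energyBound α β 0 t = α ^ 2 * (b ^ 2 - a ^ 2) + α * β * (b - a) := by
  simp only [energyBound, zero_mul, zero_div, sub_zero]
  rw [intervalIntegral.integral_add ((continuous_const_mul _).intervalIntegrable _ _)
    intervalIntegrable_const, intervalIntegral.integral_const_mul, integral_id,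
    intervalIntegral.integral_const, smul_eq_mul]
  ring

lemma integral_energyBound_const (ha : 0 < a) (hab : a ≤ b) :
    ∫ t in a..b, energyBound 0 1 ε t = -(ε / 4 * Real.log (b / a)) := by
  have h : ∀ t, energyBound 0 1 ε t = -(ε / 4) * (1 / t) := fun t => by
    rw [energyBound]
    ring
  simp_rw [h]
  rw [intervalIntegral.integral_const_mul, integral_one_div
    (notMem_uIcc_of_lt ha (ha.trans_le hab)), neg_mul]

end AffinePiece

section Cutoff

variable {R k : ℝ}

lemma testFn_eqOn_rampUp (hR : 0 < R) :
    EqOn (testFn R k) (affineMulSqrt (1 / R) (-1)) (Ioo R (2 * R)) := by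
  rintro t ⟨h1, h2⟩
  rw [testFn, cutoff, if_neg h1.not_ge, if_pos h2.le, affineMulSqrt]
  field_simp
  ring

lemma testFn_eqOn_plateau (hR : 0 < R) :
    EqOn (testFn R k) (affineMulSqrt 0 1) (Ioo (2 * R) (k * R)) := by
  rintro t ⟨h1, h2⟩
  rw [testFn, cutoff, if_neg (by linarith), if_neg h1.not_ge, if_pos h2.le, affineMulSqrt]
  ring

lemma testFn_eqOn_rampDown (hR : 0 < R) (hk : 2 ≤ k) :
    EqOn (testFn R k) (affineMulSqrt (-1 / (k * R)) 2) (Ioo (k * R) (2 * k * R)) := by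
  rintro t ⟨h1, h2⟩
  have h2R : 2 * R ≤ k * R := by nlinarith
  rw [testFn, cutoff, if_neg (by linarith), if_neg (by linarith), if_neg h1.not_ge,
    if_pos h2.le, affineMulSqrt]
  field_simp
  ring

lemma testFn_eq_zero_of_le {t : ℝ} (ht : t ≤ R) : testFn R k t = 0 := by
  rw [testFn, cutoff, if_pos ht, zero_mul]

lemma testFn_eq_zero_of_lt (hR : 0 < R) (hk : 2 ≤ k) {t : ℝ} (ht : 2 * k * R < t) :
    testFn R k t = 0 := by
  have h2R : 2 * R ≤ k * R := by nlinarith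
  rw [testFn, cutoff, if_neg (by nlinarith), if_neg (by nlinarith), if_neg (by nlinarith),
    if_neg ht.not_ge, zero_mul]

end Cutoff

section Energy

variable {V : ℝ → ℝ} {R k δ : ℝ}

lemma energyDensity_testFn_eq_zero (hR : 0 < R) (hk : 2 ≤ k) {t : ℝ}
    (ht : t < R ∨ 2 * k * R < t) : energyDensity V (testFn R k) t = 0 := by
  refine energyDensity_eq_zero ?_
  rcases ht with ht | ht
  · exact eventually_of_mem (Iio_mem_nhds ht) fun _ hs => testFn_eq_zero_of_le (le_of_lt hs)
  · exact eventually_of_mem (Ioi_mem_nhds ht) fun _ hs => testFn_eq_zero_of_lt hR hk hs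

lemma setIntegral_Ioi_energyDensity_testFn (hR : 0 < R) (hk : 2 ≤ k) :
    ∫ t in Ioi 0, energyDensity V (testFn R k) t =
      ∫ t in R..2 * k * R, energyDensity V (testFn R k) t := by
  rw [intervalIntegral.integral_of_le (by nlinarith), setIntegral_eq_of_subset_of_ae_sdiff_eq_zero
    measurableSet_Ioi.nullMeasurableSet (Ioc_subset_Ioi_self.trans (Ioi_subset_Ioi hR.le))]
  filter_upwards [volume.ae_ne R] with t htR ⟨_, ht⟩
  refine energyDensity_testFn_eq_zero hR hk ?_
  rw [mem_Ioc, not_and_or, not_lt, not_le] at ht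
  exact ht.imp (lt_of_le_of_ne · htR) id

lemma integral_energyDensity_testFn_le (hδ : 0 ≤ δ) (hR : 0 < R) (hk : 2 ≤ k)
    (hV : ContinuousOn V (Icc R (2 * k * R)))
    (hVle : ∀ t ∈ Icc R (2 * k * R), V t ≤ -(1 + δ) / (4 * t ^ 2)) :
    ∫ t in Ioi 0, energyDensity V (testFn R k) t ≤ 3 - δ / 4 * Real.log (k / 2) := by
  have h2R : 2 * R ≤ k * R := by nlinarith
  have hkR : k * R ≤ 2 * k * R := by nlinarith
  have hup : Icc R (2 * R) ⊆ Icc R (2 * k * R) := Icc_subset_Icc le_rfl (by linarith)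
  have hplateau : Icc (2 * R) (k * R) ⊆ Icc R (2 * k * R) := Icc_subset_Icc (by linarith) hkR
  have hdown : Icc (k * R) (2 * k * R) ⊆ Icc R (2 * k * R) := Icc_subset_Icc (by linarith) le_rfl
  have hVle0 : ∀ t ∈ Icc R (2 * k * R), V t ≤ -(1 + 0) / (4 * t ^ 2) :=
    fun t ht => (hVle t ht).trans (by gcongr)
  have hI1 := intervalIntegrable_energyDensity hR (by linarith) (testFn_eqOn_rampUp (k := k) hR)
    (hV.mono hup)
  have hI2 := intervalIntegrable_energyDensity (by linarith) h2R (testFn_eqOn_plateau hR)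
    (hV.mono hplateau)
  have hI3 := intervalIntegrable_energyDensity (by positivity) hkR (testFn_eqOn_rampDown hR hk)
    (hV.mono hdown)
  have hE1 := integral_energyDensity_le hR (by linarith) (testFn_eqOn_rampUp (k := k) hR)
    (hV.mono hup) fun t ht => hVle0 t (hup ht)
  have hE2 := integral_energyDensity_le (by linarith) h2R (testFn_eqOn_plateau hR)
    (hV.mono hplateau) fun t ht => hVle t (hplateau ht)
  have hE3 := integral_energyDensity_le (by positivity) hkR (testFn_eqOn_rampDown hR hk)
    (hV.mono hdown) fun t ht => hVle0 t (hdown ht)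
  rw [integral_energyBound_zero] at hE1 hE3
  rw [integral_energyBound_const (by positivity) h2R, show k * R / (2 * R) = k / 2 by field_simp]
    at hE2
  have e1 : (1 / R) ^ 2 * ((2 * R) ^ 2 - R ^ 2) + 1 / R * -1 * (2 * R - R) = 2 := by
    field_simp; ring
  have e3 : (-1 / (k * R)) ^ 2 * ((2 * k * R) ^ 2 - (k * R) ^ 2) +
      -1 / (k * R) * 2 * (2 * k * R - k * R) = 1 := by
    field_simp; ring
  rw [setIntegral_Ioi_energyDensity_testFn hR hk,
    ← intervalIntegral.integral_add_adjacent_intervals hI1 (hI2.trans hI3),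
    ← intervalIntegral.integral_add_adjacent_intervals hI2 hI3]
  linarith

end Energy

lemma three_sub_mul_log_half_neg {δ k : ℝ} (hδ : 0 < δ) (hk : 2 * Real.exp (12 / δ) < k) :
    3 - δ / 4 * Real.log (k / 2) < 0 := by
  have hlog : 12 / δ < Real.log (k / 2) :=
    (Real.lt_log_iff_exp_lt (by linarith [Real.exp_pos (12 / δ)])).2 (by linarith)
  have := mul_lt_mul_of_pos_left hlog (by positivity : 0 < δ / 4)
  rw [show δ / 4 * (12 / δ) = 3 by field_simp; norm_num] at this
  linarith

/-- Energy estimate for the test function: if `V(t) ≤ −(1+δ)/(4t²)` for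
`t ≥ R̃`, `R ≥ R̃` and `k > 2`, then
`∫_0^∞ (|φ'|² + Vφ²) dt ≤ 3 − (δ/4) log(k/2)`; in particular the integral is
negative once `k > 2 exp(12/δ)`. -/
theorem test_function_energy_estimate (δ Rt R k : ℝ) (hδ : 0 < δ) (hRt : 0 < Rt)
    (hRRt : Rt ≤ R) (hk : 2 < k)
    (V : ℝ → ℝ) (hV : ContinuousOn V (Set.Ioi 0))
    (hVle : ∀ t, Rt ≤ t → V t ≤ -(1 + δ) / (4 * t ^ 2)) :
    (∫ t in Ioi (0:ℝ),
        ((deriv (testFn R k) t) ^ 2 + V t * (testFn R k t) ^ 2)) ≤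
      3 - δ / 4 * Real.log (k / 2) ∧
    (2 * Real.exp (12 / δ) < k →
      (∫ t in Ioi (0:ℝ),
          ((deriv (testFn R k) t) ^ 2 + V t * (testFn R k t) ^ 2)) < 0) := by
  have hE := integral_energyDensity_testFn_le hδ.le (hRt.trans_le hRRt) hk.le
    (hV.mono fun t ht => hRt.trans_le (hRRt.trans ht.1)) fun t ht => hVle t (hRRt.trans ht.1)
  exact ⟨hE, fun hkδ => hE.trans_lt (three_sub_mul_log_half_neg hδ hkδ)⟩
end

section
/- Under the asymptotics t(r) = √κ + δ₂/(2√κ r²) + o(r^{-2}), T(r) = √κ + δ₁/(2√κ r²) + o(r^{-2}), and Ric(∇r,∇r) = −(n−1)(κ + δ₂/r²) (lower bound), one has (1/4)(Δr)² − (1/2)|∇dr|² − (1/2)Ric(∇r,∇r) + 1/(4r²) ≥ (n−1)²κ/4 + (1 − (2n−5)δ₁ + (n²−4)δ₂)/(4r²) + o(r^{-2}); in particular if 1 − (2n−5)δ₁ + (n²−4)δ₂ > 0 this expression exceeds (n−1)²κ/4 for all sufficiently large r. -/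
/-!
Replacing `Δr`, `|∇dr|²` and `Ric(∇r,∇r)` by their comparison bounds leaves `Q(T, t) +
(n−1)(κ + δ₂/r²)/2 + 1/(4r²)` with `Q` a quadratic form. Expanding `Q` at `(√κ, √κ)`, the linear
terms turn the `δᵢ/(2√κ r²)` parts of `T` and `t` into the `r⁻²` coefficient
`1 + (3−n)δ₁ + (n−2)(n+1)δ₂`, which exceeds `1 − (2n−5)δ₁ + (n²−4)δ₂` by `(n−2)(δ₁−δ₂) ≥ 0`; the
remaining `Q(T − √κ, t − √κ)` is quadratic in quantities of size `O(r⁻²)`, hence `o(r⁻²)`.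
-/

open Filter Asymptotics Topology

/-- At `Δr = T + (n−2)t` and `|∇dr|² = (n−2)T² + t²` this is `(1/4)(Δr)² − (1/2)|∇dr|²`. -/
noncomputable def comparisonQuadratic (N T t : ℝ) : ℝ :=
  1 / 4 * (T + (N - 2) * t) ^ 2 - 1 / 2 * ((N - 2) * T ^ 2 + t ^ 2)

section Asymptotics

variable {α : Type*} {l : Filter α} {f g k e : α → ℝ}

theorem isLittleO_mul_of_isBigO_of_tendsto_zero (hf : f =O[l] k) (hg : g =O[l] k)
    (hk : Tendsto k l (𝓝 0)) : (fun x => f x * g x) =o[l] k := by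
  simpa using hf.mul_isLittleO (hg.trans_isLittleO ((isLittleO_one_iff ℝ).mpr hk))

theorem isBigO_of_eq_mul_add_isLittleO (a : ℝ) (hf : ∀ x, f x = a * k x + e x)
    (he : e =o[l] k) : f =O[l] k := by
  rw [funext hf]
  exact ((isBigO_refl k l).const_mul_left a).add he.isBigO

theorem eventually_pos_mul_add_of_isLittleO {c : ℝ} (hc : 0 < c) (he : e =o[l] k)
    (hk : ∀ᶠ x in l, 0 < k x) : ∀ᶠ x in l, 0 < c * k x + e x := by
  filter_upwards [he.bound (half_pos hc), hk] with x hex hkx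
  rw [Real.norm_eq_abs, Real.norm_eq_abs, abs_of_pos hkx] at hex
  linarith [neg_abs_le (e x), mul_pos hc hkx]

theorem isLittleO_comparisonQuadratic (N : ℝ) (hf : f =O[l] k) (hg : g =O[l] k)
    (hk : Tendsto k l (𝓝 0)) : (fun x => comparisonQuadratic N (f x) (g x)) =o[l] k := by
  have hff := isLittleO_mul_of_isBigO_of_tendsto_zero hf hf hk
  have hfg := isLittleO_mul_of_isBigO_of_tendsto_zero hf hg hk
  have hgg := isLittleO_mul_of_isBigO_of_tendsto_zero hg hg hk
  refine (((hff.const_mul_left (1 / 4 - (N - 2) / 2)).add (hfg.const_mul_left ((N - 2) / 2))).add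
    (hgg.const_mul_left ((N - 2) ^ 2 / 4 - 1 / 2))).congr_left fun x => ?_
  simp only [comparisonQuadratic]
  ring

end Asymptotics

theorem tendsto_one_div_sq_atTop_zero : Tendsto (fun r : ℝ => 1 / r ^ 2) atTop (𝓝 0) := by
  simpa using tendsto_pow_neg_atTop (𝕜 := ℝ) two_ne_zero

theorem comparisonQuadratic_add (N s v u : ℝ) :
    comparisonQuadratic N (s + v) (s + u) =
      ((N - 1) ^ 2 / 4 - (N - 1) / 2) * s ^ 2 + s * ((3 - N) / 2 * v + N * (N - 3) / 2 * u)
        + comparisonQuadratic N v u := by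
  simp only [comparisonQuadratic]
  ring

theorem quarter_sq_sub_half_sub_half_le_of_le {A H K lap hess ric : ℝ} (hA : 0 ≤ A)
    (hlap : A ≤ lap) (hhess : hess ≤ H) (hric : ric ≤ K) :
    1 / 4 * A ^ 2 - 1 / 2 * H - 1 / 2 * K ≤ 1 / 4 * lap ^ 2 - 1 / 2 * hess - 1 / 2 * ric := by
  nlinarith [pow_le_pow_left₀ hA hlap 2]

theorem comparisonQuadratic_expansion (N κ δ₁ δ₂ : ℝ) (hκ : 0 < κ) {t T e₁ e₂ : ℝ → ℝ}
    (ht : ∀ r, t r = Real.sqrt κ + δ₂ / (2 * Real.sqrt κ * r ^ 2) + e₂ r)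
    (hT : ∀ r, T r = Real.sqrt κ + δ₁ / (2 * Real.sqrt κ * r ^ 2) + e₁ r)
    (he₁ : e₁ =o[atTop] fun r : ℝ => 1 / r ^ 2)
    (he₂ : e₂ =o[atTop] fun r : ℝ => 1 / r ^ 2) :
    ∃ e : ℝ → ℝ, (e =o[atTop] fun r : ℝ => 1 / r ^ 2) ∧ ∀ r,
      comparisonQuadratic N (T r) (t r) + 1 / 2 * ((N - 1) * (κ + δ₂ / r ^ 2)) + 1 / (4 * r ^ 2) =
        (N - 1) ^ 2 * κ / 4 + (1 + (3 - N) * δ₁ + (N - 2) * (N + 1) * δ₂) / (4 * r ^ 2) + e r := by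
  set s := Real.sqrt κ
  have hs : s ≠ 0 := (Real.sqrt_pos.mpr hκ).ne'
  have hsκ : s ^ 2 = κ := Real.sq_sqrt hκ.le
  have hv : ∀ r, T r - s = δ₁ / (2 * s) * (1 / r ^ 2) + e₁ r := fun r => by rw [hT]; ring
  have hu : ∀ r, t r - s = δ₂ / (2 * s) * (1 / r ^ 2) + e₂ r := fun r => by rw [ht]; ring
  refine ⟨fun r => s * ((3 - N) / 2 * e₁ r + N * (N - 3) / 2 * e₂ r)
      + comparisonQuadratic N (T r - s) (t r - s), ?_, fun r => ?_⟩
  · exact (((he₁.const_mul_left _).add (he₂.const_mul_left _)).const_mul_left s).add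
      (isLittleO_comparisonQuadratic N (isBigO_of_eq_mul_add_isLittleO _ hv he₁)
        (isBigO_of_eq_mul_add_isLittleO _ hu he₂) tendsto_one_div_sq_atTop_zero)
  · have hsplit := comparisonQuadratic_add N s (T r - s) (t r - s)
    simp only [add_sub_cancel] at hsplit
    beta_reduce
    rw [hsplit]
    generalize comparisonQuadratic N (T r - s) (t r - s) = Q
    rw [hv, hu, ← hsκ]
    field_simp
    ring

/-- The curvature estimate in the proof of Theorem 3.1: with
`Δr ≥ T + (n−2)t`, `|∇dr|² ≤ (n−2)T² + t²`,
`Ric(∇r,∇r) ≤ −(n−1)(κ + δ₂/r²)`, and the asymptotics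
`t = √κ + δ₂/(2√κ r²) + o(r⁻²)`, `T = √κ + δ₁/(2√κ r²) + o(r⁻²)`,
one has `(1/4)(Δr)² − (1/2)|∇dr|² − (1/2)Ric + 1/(4r²)
  ≥ (n−1)²κ/4 + (1 − (2n−5)δ₁ + (n²−4)δ₂)/(4r²) + o(r⁻²)`;
in particular if `1 − (2n−5)δ₁ + (n²−4)δ₂ > 0` the expression exceeds
`(n−1)²κ/4` for all sufficiently large `r`. -/
theorem curvature_estimate_thm31 (n : ℕ) (hn : 2 ≤ n)
    (κ δ₁ δ₂ R₀ : ℝ) (hκ : 0 < κ) (hδ : δ₂ ≤ δ₁)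
    (t T e₁ e₂ lap hessSq ric : ℝ → ℝ)
    (hle : ∀ r, R₀ ≤ r → 0 ≤ t r ∧ t r ≤ T r)
    (ht : ∀ r, t r = Real.sqrt κ + δ₂ / (2 * Real.sqrt κ * r ^ 2) + e₂ r)
    (hT : ∀ r, T r = Real.sqrt κ + δ₁ / (2 * Real.sqrt κ * r ^ 2) + e₁ r)
    (he₁ : e₁ =o[atTop] fun r : ℝ => 1 / r ^ 2)
    (he₂ : e₂ =o[atTop] fun r : ℝ => 1 / r ^ 2)
    (hlap : ∀ r, R₀ ≤ r → lap r ≥ T r + ((n : ℝ) - 2) * t r)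
    (hhess : ∀ r, R₀ ≤ r → hessSq r ≤ ((n : ℝ) - 2) * (T r) ^ 2 + (t r) ^ 2)
    (hric : ∀ r, R₀ ≤ r → ric r ≤ -(((n : ℝ) - 1) * (κ + δ₂ / r ^ 2))) :
    (∃ e : ℝ → ℝ, (e =o[atTop] fun r : ℝ => 1 / r ^ 2) ∧
      ∀ᶠ r in atTop,
        (1 / 4) * (lap r) ^ 2 - (1 / 2) * hessSq r - (1 / 2) * ric r
            + 1 / (4 * r ^ 2) ≥
          ((n : ℝ) - 1) ^ 2 * κ / 4
            + (1 - (2 * (n : ℝ) - 5) * δ₁ + ((n : ℝ) ^ 2 - 4) * δ₂) / (4 * r ^ 2)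
            + e r) ∧
    (0 < 1 - (2 * (n : ℝ) - 5) * δ₁ + ((n : ℝ) ^ 2 - 4) * δ₂ →
      ∃ R₁ : ℝ, ∀ r, R₁ ≤ r →
        (1 / 4) * (lap r) ^ 2 - (1 / 2) * hessSq r - (1 / 2) * ric r
            + 1 / (4 * r ^ 2) > ((n : ℝ) - 1) ^ 2 * κ / 4) := by
  have hN : (2 : ℝ) ≤ n := by exact_mod_cast hn
  obtain ⟨e, he, hexp⟩ := comparisonQuadratic_expansion n κ δ₁ δ₂ hκ ht hT he₁ he₂
  set C := 1 - (2 * (n : ℝ) - 5) * δ₁ + ((n : ℝ) ^ 2 - 4) * δ₂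
  have hC : C ≤ 1 + (3 - n) * δ₁ + (n - 2) * (n + 1) * δ₂ := by
    linarith [mul_nonneg (sub_nonneg.mpr hN) (sub_nonneg.mpr hδ)]
  have hmain : ∀ᶠ r in atTop, (1 / 4) * (lap r) ^ 2 - (1 / 2) * hessSq r - (1 / 2) * ric r
      + 1 / (4 * r ^ 2) ≥ ((n : ℝ) - 1) ^ 2 * κ / 4 + C / (4 * r ^ 2) + e r := by
    filter_upwards [eventually_ge_atTop R₀] with r hr
    obtain ⟨ht₀, htT⟩ := hle r hr
    have hlap_nonneg : 0 ≤ T r + ((n : ℝ) - 2) * t r :=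
      add_nonneg (ht₀.trans htT) (mul_nonneg (sub_nonneg.mpr hN) ht₀)
    have hcompare := quarter_sq_sub_half_sub_half_le_of_le hlap_nonneg (hlap r hr) (hhess r hr)
      (hric r hr)
    have hC' := div_le_div_of_nonneg_right hC (by positivity : (0 : ℝ) ≤ 4 * r ^ 2)
    have hexp_r := hexp r
    rw [comparisonQuadratic] at hexp_r
    linarith
  refine ⟨⟨e, he, hmain⟩, fun hCpos => eventually_atTop.mp ?_⟩
  filter_upwards [hmain, eventually_pos_mul_add_of_isLittleO (div_pos hCpos four_pos) he
    (eventually_gt_atTop 0 |>.mono fun r hr => by positivity)] with r hlower hpos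
  linarith [show C / (4 * r ^ 2) = C / 4 * (1 / r ^ 2) by ring]
end
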